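/- Let A be a unital C*-algebra and P : A → A a unital completely positive projection (P∘P = P, P(1) = 1). Then the range PA, equipped with the original norm and involution and the product a ∘ b := P(ab), is a unital C*-algebra (Choi–Effros product). -/

import Mathlib

/-- A bounded linear map on a C*-algebra is completely positive if its entrywise
application maps positive matrices (those of the form `Nᴴ * N`) to positive matrices,
for every matrix size. -/
def IsCompletelyPositive {A : Type*} [NormedRing A] [StarRing A] [NormedAlgebra ℂ A]
    (P : A →L[ℂ] A) : Prop :=
  ∀ (n : ℕ) (M : Matrix (Fin n) (Fin n) A),
    (∃ N : Matrix (Fin n) (Fin n) A, M = N.conjTranspose * N) →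
    ∃ N' : Matrix (Fin n) (Fin n) A, M.map (fun a => P a) = N'.conjTranspose * N'

/-!
A unital completely positive map satisfies the Kadison–Schwarz inequality
`P(a)* P(a) ≤ P(a* a)` (apply complete positivity to the `2 × 2` matrix with rows `(a, 1)`
and `(0, 0)`), which makes `P` contractive.
For `w = P w` the element `d = P(w* w) - w* w` is then positive with `P d = 0`, and a positive
element killed by `P` is killed after multiplication by anything: `P(dx) = P(xd) = 0`.
Polarization extends this from `w* w` to products `u v` of fixed points, i.e.
`P(P(uv) x) = P(uvx)` and `P(x P(uv)) = P(xuv)`, which gives associativity of `a ∘ b = P(ab)`.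
The C*-identity follows from `u u* ≤ P(u u*)` (Kadison–Schwarz for `u*`) and contractivity.
-/

open Complex

section Polarization

variable {A : Type*} [Ring A] [StarRing A] [Algebra ℂ A] [StarModule ℂ A]

theorem four_smul_mul_eq_polarization (u v : A) :
    (4 : ℂ) • (u * v) =
      star (v + star u) * (v + star u) + I • (star (v + I • star u) * (v + I • star u))
        - star (v - star u) * (v - star u) - I • (star (v - I • star u) * (v - I • star u)) := by
  simp only [star_add, star_sub, star_smul, RCLike.star_def, conj_I, add_mul, mul_add,
    sub_mul, mul_sub, smul_mul_assoc, mul_smul_comm, smul_smul, smul_sub, smul_add, neg_smul,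
    star_star, I_mul_I, neg_neg, one_smul, neg_mul]
  match_scalars <;> simp; ring

theorem Submodule.mul_mem_of_star_mul_self_mem {R S : Submodule ℂ A}
    (hR : ∀ x ∈ R, star x ∈ R) (hS : ∀ w ∈ R, star w * w ∈ S) {u v : A} (hu : u ∈ R)
    (hv : v ∈ R) : u * v ∈ S := by
  have hu' := hR u hu
  rw [← S.smul_mem_iff (by norm_num : (4 : ℂ) ≠ 0), four_smul_mul_eq_polarization]
  refine S.sub_mem (S.sub_mem (S.add_mem ?_ (S.smul_mem _ ?_)) ?_) (S.smul_mem _ ?_) <;>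
    apply hS
  · exact R.add_mem hv hu'
  · exact R.add_mem hv (R.smul_mem _ hu')
  · exact R.sub_mem hv hu'
  · exact R.sub_mem hv (R.smul_mem _ hu')

end Polarization

theorem sum_star_sub_mul_mul_sub_mul {A ι : Type*} [Ring A] [StarRing A] [Fintype ι]
    (v w : ι → A) {c : A} (hc : ∑ k, star (w k) * v k = c) (hw : ∑ k, star (w k) * w k = 1) :
    ∑ k, star (v k - w k * c) * (v k - w k * c) = ∑ k, star (v k) * v k - star c * c := by
  have hc' : ∑ k, star (v k) * w k = star c := by simpa [star_sum] using congrArg star hc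
  simp only [star_sub, star_mul, sub_mul, mul_sub, Finset.sum_sub_distrib, ← mul_assoc]
  simp only [mul_assoc (star c), ← Finset.sum_mul, ← Finset.mul_sum, hc, hc', hw, one_mul]
  abel

def ContinuousLinearMap.twoSidedKer {A : Type*} [NormedRing A] [NormedAlgebra ℂ A]
    (P : A →L[ℂ] A) : Submodule ℂ A where
  carrier := {d | ∀ x, P (d * x) = 0 ∧ P (x * d) = 0}
  zero_mem' := by simp
  add_mem' {d e} hd he x := by
    simp [add_mul, mul_add, (hd x).1, (hd x).2, (he x).1, (he x).2]
  smul_mem' c d hd x := by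
    simp [(hd x).1, (hd x).2]

namespace IsCompletelyPositive

section Gram

variable {A : Type*} [NormedRing A] [StarRing A] [NormedAlgebra ℂ A] {P : A →L[ℂ] A}

/-- Complete positivity at `Nᴴ N`, where `N` has first row `x` and zeros elsewhere. -/
theorem exists_gram (hP : IsCompletelyPositive P) {n : ℕ} (x : Fin (n + 1) → A) :
    ∃ V : Matrix (Fin (n + 1)) (Fin (n + 1)) A,
      ∀ i j, P (star (x i) * x j) = ∑ k, star (V k i) * V k j := by
  let N : Matrix (Fin (n + 1)) (Fin (n + 1)) A := Matrix.of fun k j => if k = 0 then x j else 0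
  obtain ⟨V, hV⟩ := hP _ (N.conjTranspose * N) ⟨N, rfl⟩
  refine ⟨V, fun i j => ?_⟩
  simpa [N, Matrix.mul_apply, Matrix.conjTranspose_apply] using congrFun (congrFun hV i) j

theorem map_star (hP : IsCompletelyPositive P) (a : A) : P (star a) = star (P a) := by
  obtain ⟨V, hV⟩ := hP.exists_gram ![a, 1]
  have h01 : P (star a) = ∑ k, star (V k 0) * V k 1 := by simpa using hV 0 1
  have h10 : P a = ∑ k, star (V k 1) * V k 0 := by simpa using hV 1 0
  simp [h01, h10]

end Gram

section Order

variable {A : Type*} [CStarAlgebra A] [PartialOrder A] [StarOrderedRing A] {P : A →L[ℂ] A}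

theorem map_nonneg (hP : IsCompletelyPositive P) {x : A} (hx : 0 ≤ x) : 0 ≤ P x := by
  obtain ⟨s, rfl⟩ := CStarAlgebra.nonneg_iff_eq_star_mul_self.mp hx
  obtain ⟨V, hV⟩ := hP.exists_gram ![s]
  have h00 : P (star s * s) = ∑ k, star (V k 0) * V k 0 := by simpa using hV 0 0
  exact h00 ▸ Finset.sum_nonneg fun k _ => star_mul_self_nonneg (V k 0)

theorem map_mono (hP : IsCompletelyPositive P) {x y : A} (hxy : x ≤ y) : P x ≤ P y := by
  simpa using hP.map_nonneg (sub_nonneg.mpr hxy)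

/-- The Kadison–Schwarz inequality. -/
theorem star_apply_mul_apply_le (hP : IsCompletelyPositive P) (hone : P 1 = 1) (a : A) :
    star (P a) * P a ≤ P (star a * a) := by
  obtain ⟨V, hV⟩ := hP.exists_gram ![a, 1]
  have h00 : P (star a * a) = ∑ k, star (V k 0) * V k 0 := by simpa using hV 0 0
  have h10 : ∑ k, star (V k 1) * V k 0 = P a := by simpa using (hV 1 0).symm
  have h11 : ∑ k, star (V k 1) * V k 1 = 1 := by simpa [hone] using (hV 1 1).symm
  rw [← sub_nonneg, h00, ← sum_star_sub_mul_mul_sub_mul _ _ h10 h11]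
  exact Finset.sum_nonneg fun k _ => star_mul_self_nonneg _

theorem norm_apply_le (hP : IsCompletelyPositive P) (hone : P 1 = 1) (x : A) :
    ‖P x‖ ≤ ‖x‖ := by
  have hP_alg : P (algebraMap ℝ A (‖x‖ ^ 2)) = algebraMap ℝ A (‖x‖ ^ 2) := by
    rw [IsScalarTower.algebraMap_apply ℝ ℂ A, Algebra.algebraMap_eq_smul_one, map_smul, hone]
  have hle : star (P x) * P x ≤ algebraMap ℝ A (‖x‖ ^ 2) := calc
    _ ≤ P (star x * x) := hP.star_apply_mul_apply_le hone x
    _ ≤ P (algebraMap ℝ A (‖x‖ ^ 2)) := hP.map_mono CStarAlgebra.star_mul_le_algebraMap_norm_sq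
    _ = _ := hP_alg
  rw [← CStarAlgebra.norm_le_iff_le_algebraMap _ (by positivity) (star_mul_self_nonneg _),
    CStarRing.norm_star_mul_self, ← sq] at hle
  exact (pow_le_pow_iff_left₀ (norm_nonneg _) (norm_nonneg _) two_ne_zero).mp hle

theorem mem_twoSidedKer_of_nonneg (hP : IsCompletelyPositive P) {d : A} (hd : 0 ≤ d)
    (hPd : P d = 0) : d ∈ P.twoSidedKer := by
  obtain ⟨s, rfl⟩ := CStarAlgebra.nonneg_iff_eq_star_mul_self.mp hd
  have hleft : ∀ x, P (star s * s * x) = 0 := by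
    intro x
    obtain ⟨V, hV⟩ := hP.exists_gram ![s, s * x]
    have hV0 : ∀ k, V k 0 = 0 := by
      have h00 : ∑ k, star (V k 0) * V k 0 = 0 := by simpa [hPd] using (hV 0 0).symm
      rw [Finset.sum_eq_zero_iff_of_nonneg fun k _ => star_mul_self_nonneg _] at h00
      exact fun k => CStarRing.star_mul_self_eq_zero_iff _ |>.mp (h00 k (Finset.mem_univ k))
    simpa [mul_assoc, hV0] using hV 0 1
  intro x
  refine ⟨hleft x, ?_⟩
  simpa [← hP.map_star, mul_assoc] using congrArg star (hleft (star x))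

/-- `P (w* w) - w* w` is positive by Kadison–Schwarz and killed by the idempotent `P`. -/
theorem apply_star_mul_self_sub_mem_twoSidedKer (hP : IsCompletelyPositive P) (hone : P 1 = 1)
    (hidem : ∀ a, P (P a) = P a) {w : A} (hw : P w = w) :
    P (star w * w) - star w * w ∈ P.twoSidedKer := by
  refine hP.mem_twoSidedKer_of_nonneg (sub_nonneg.mpr ?_) (by rw [map_sub, hidem, sub_self])
  simpa [hw] using hP.star_apply_mul_apply_le hone w

theorem apply_mul_sub_mem_twoSidedKer (hP : IsCompletelyPositive P) (hone : P 1 = 1)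
    (hidem : ∀ a, P (P a) = P a) {u v : A} (hu : P u = u) (hv : P v = v) :
    P (u * v) - u * v ∈ P.twoSidedKer := by
  let R : Submodule ℂ A := (P : A →ₗ[ℂ] A).eqLocus LinearMap.id
  let S : Submodule ℂ A := P.twoSidedKer.comap ((P : A →ₗ[ℂ] A) - LinearMap.id)
  have hR : ∀ x ∈ R, star x ∈ R := fun x (hx : P x = x) => show P (star x) = star x by
    rw [hP.map_star, hx]
  have hS : ∀ w ∈ R, star w * w ∈ S := fun w hw =>
    hP.apply_star_mul_self_sub_mem_twoSidedKer hone hidem hw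
  exact Submodule.mul_mem_of_star_mul_self_mem (S := S) hR hS hu hv

theorem apply_apply_mul_mul_eq (hP : IsCompletelyPositive P) (hone : P 1 = 1)
    (hidem : ∀ a, P (P a) = P a) {u v w : A} (hu : P u = u) (hv : P v = v) (hw : P w = w) :
    P (P (u * v) * w) = P (u * P (v * w)) := by
  have huv := ((hP.apply_mul_sub_mem_twoSidedKer hone hidem hu hv) w).1
  have hvw := ((hP.apply_mul_sub_mem_twoSidedKer hone hidem hv hw) u).2
  rw [sub_mul, map_sub, sub_eq_zero] at huv
  rw [mul_sub, map_sub, sub_eq_zero] at hvw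
  rw [huv, hvw, mul_assoc]

theorem norm_apply_mul_star_self (hP : IsCompletelyPositive P) (hone : P 1 = 1) {u : A}
    (hu : P u = u) : ‖P (u * star u)‖ = ‖u‖ ^ 2 := by
  have hle : u * star u ≤ P (u * star u) := by
    simpa [hP.map_star, hu] using hP.star_apply_mul_apply_le hone (star u)
  refine le_antisymm ?_ ?_
  · rw [sq, ← CStarRing.norm_self_mul_star]
    exact hP.norm_apply_le hone _
  · rw [sq, ← CStarRing.norm_self_mul_star]
    exact CStarAlgebra.norm_le_norm_of_nonneg_of_le (mul_star_self_nonneg u) hle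

end Order

end IsCompletelyPositive

/-- Choi–Effros: If `P` is a unital completely positive projection on a
unital C*-algebra `A`, then the range `P A`, with the original norm and involution and
the product `a ∘ b := P(ab)`, is a unital C*-algebra: the range is selfadjoint and
contains the unit, the product `∘` is associative and submultiplicative on `P A`, the
involution is an anti-homomorphism for `∘`, and the C*-identity holds. -/
theorem stmt_16 {A : Type*} [NormedRing A] [StarRing A] [CStarRing A] [NormedAlgebra ℂ A]
    [CompleteSpace A] [StarModule ℂ A]
    (P : A →L[ℂ] A)
    (hidem : ∀ a : A, P (P a) = P a)
    (hone : P 1 = 1)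
    (hcp : IsCompletelyPositive P) :
    (∀ a : A, ∃ b : A, star (P a) = P b) ∧
    ((1 : A) ∈ Set.range fun a => P a) ∧
    (∀ a b c : A, P (P (P a * P b) * P c) = P (P a * P (P b * P c))) ∧
    (∀ a b : A, ‖P (P a * P b)‖ ≤ ‖P a‖ * ‖P b‖) ∧
    (∀ a b : A, star (P (P a * P b)) = P (star (P b) * star (P a))) ∧
    (∀ a : A, ‖P (P a * star (P a))‖ = ‖P a‖ ^ 2) := by
  let _ : CStarAlgebra A := ⟨⟩
  let _ : PartialOrder A := CStarAlgebra.spectralOrder A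
  let _ : StarOrderedRing A := CStarAlgebra.spectralOrderedRing A
  refine ⟨fun a => ⟨star a, (hcp.map_star a).symm⟩, ⟨1, hone⟩,
    fun a b c => hcp.apply_apply_mul_mul_eq hone hidem (hidem a) (hidem b) (hidem c),
    fun a b => (hcp.norm_apply_le hone _).trans (norm_mul_le _ _),
    fun a b => by rw [← hcp.map_star, star_mul],
    fun a => hcp.norm_apply_mul_star_self hone (hidem a)⟩
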